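/- arXiv:2003.03128 — 5 statements merged into one kernel-verified Lean document; each statement's English description precedes it below -/
import Mathlib

section
/- Let n, m, p, q ∈ ℕ and let F, f : ℝⁿ × ℝᵐ → ℝ, G : ℝⁿ × ℝᵐ → ℝ^q, g : ℝⁿ × ℝᵐ → ℝ^p be continuously differentiable. Assume: (i) f and each component gᵢ are convex as functions of the joint variable (x,y) (full convexity of the lower level); (ii) the optimal value function φ(x) := inf{ f(x,y) : y ∈ ℝᵐ, g(x,y) ≤ 0 } is finite on a neighborhood of x̄; (iii) (x̄,ȳ) is a local optimal solution of the problem min F(x,y) subject to G(x,y) ≤ 0, g(x,y) ≤ 0, f(x,y) ≤ φ(x); (iv) this problem is partially calm at (x̄,ȳ); (v) lower-level regularity holds at (x̄,ȳ): there is d ∈ ℝᵐ with ∇_y gᵢ(x̄,ȳ)ᵀd < 0 for every i with gᵢ(x̄,ȳ) = 0; (vi) upper-level regularity holds at (x̄,ȳ): there is d ∈ ℝⁿ⁺ᵐ with ∇G_j(x̄,ȳ)ᵀd < 0 for every j with G_j(x̄,ȳ) = 0 and ∇gᵢ(x̄,ȳ)ᵀd < 0 for every i with gᵢ(x̄,ȳ)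 = 0. Then there exist λ ≥ 0 and multipliers u, w ∈ ℝ^p, v ∈ ℝ^q such that: ∇ₓF(x̄,ȳ) + ∇ₓg(x̄,ȳ)ᵀ(u − λw) + ∇ₓG(x̄,ȳ)ᵀv = 0; ∇_yF(x̄,ȳ) + ∇_yg(x̄,ȳ)ᵀ(u − λw) + ∇_yG(x̄,ȳ)ᵀv = 0; ∇_yf(x̄,ȳ) + ∇_yg(x̄,ȳ)ᵀw = 0; u ≥ 0, g(x̄,ȳ) ≤ 0, uᵀg(x̄,ȳ) = 0; v ≥ 0, G(x̄,ȳ) ≤ 0, vᵀG(x̄,ȳ) = 0; w ≥ 0, wᵀg(x̄,ȳ) = 0. -/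
open Filter Topology

/-!
Under full convexity, a lower-level KKT multiplier `w` at `(x̄, ȳ)` turns the linearization in
`x` of the lower-level Lagrangian `f + ∑ wᵢ gᵢ` into an affine minorant of the value function `φ`
that is exact at `x̄`. Partial calmness then makes `(x̄, ȳ)` a local minimizer of the smooth
penalized problem `F + λ (f - minorant)` subject to `G ≤ 0`, `g ≤ 0`, whose KKT conditions under
the upper-level regularity are the claimed ones. Both KKT systems come from Fermat's rule on the
tangent cone combined with Gordan's alternative.
-/

theorem gordan_alternative {ι E : Type*} [Fintype ι] [AddCommGroup E] [Module ℝ E]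
    (l : ι → E →ₗ[ℝ] ℝ) (h : ¬∃ d, ∀ k, l k d < 0) :
    ∃ μ : ι → ℝ, 0 ≤ μ ∧ μ ≠ 0 ∧ ∀ d, ∑ k, μ k * l k d = 0 := by
  classical
  set U : Set (ι → ℝ) := Set.univ.pi fun _ => Set.Iio 0
  set V := LinearMap.range (LinearMap.pi l)
  have hUV : Disjoint U V := by
    refine Set.disjoint_left.2 ?_
    rintro _ hU ⟨d, rfl⟩
    exact h ⟨d, fun k => hU k trivial⟩
  obtain ⟨f, u, hfU, hfV⟩ := geometric_hahn_banach_open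
    (convex_pi fun _ _ => convex_Iio 0) (isOpen_set_pi Set.finite_univ fun _ _ => isOpen_Iio)
    V.convex hUV
  have hf_apply (v : ι → ℝ) : f v = ∑ k, v k * f (Pi.single k 1) := by
    conv_lhs => rw [← Finset.univ_sum_single v]
    refine (map_sum f _ _).trans (Finset.sum_congr rfl fun k _ => ?_)
    rw [← smul_eq_mul, ← map_smul, ← Pi.single_smul', smul_eq_mul, mul_one]
  have hu : u ≤ 0 := by simpa using hfV 0 V.zero_mem
  have hfV_zero (b : ι → ℝ) (hb : b ∈ V) : f b = 0 := by
    by_contra hne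
    have hscaled := hfV (((u - 1) / f b) • b) (V.smul_mem _ hb)
    rw [map_smul, smul_eq_mul, div_mul_cancel₀ _ hne] at hscaled
    linarith
  have hf_nonpos : ∀ v ∈ closure U, f v ≤ 0 :=
    closure_minimal (fun v hv => (hfU v hv).le.trans hu) (isClosed_le f.continuous continuous_const)
  refine ⟨fun k => f (Pi.single k 1), fun k => ?_, fun hμ => ?_, fun d => ?_⟩
  · have hmem : -Pi.single k 1 ∈ closure U := by
      rw [closure_pi_set]
      intro j _
      rw [closure_Iio' ⟨-1, by norm_num⟩]
      by_cases hj : j = k <;> simp [hj]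
    simpa using hf_nonpos _ hmem
  · have hneg := hfU (fun _ => -1) fun _ _ => by norm_num
    rw [hf_apply, Finset.sum_eq_zero fun k _ => by rw [congrFun hμ k, Pi.zero_apply, mul_zero]]
      at hneg
    linarith
  · have hrange := hfV_zero _ ⟨d, rfl⟩
    rw [hf_apply] at hrange
    simpa [mul_comm] using hrange

theorem HasDerivAt.eventually_nhdsGT_lt {ψ : ℝ → ℝ} {a x : ℝ} (hψ : HasDerivAt ψ a x)
    (ha : a < 0) : ∀ᶠ t in 𝓝[>] x, ψ t < ψ x := by
  have hslope : ∀ᶠ t in 𝓝[>] x, slope ψ x t < 0 :=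
    ((hasDerivAt_iff_tendsto_slope.1 hψ).mono_left (nhdsGT_le_nhdsNE x)).eventually_lt_const ha
  filter_upwards [hslope, self_mem_nhdsWithin] with t ht hxt
  rw [slope_def_field, div_neg_iff] at ht
  rcases ht with ⟨-, h⟩ | ⟨h, -⟩ <;> linarith [hxt.out]

section Constraints

variable {E ι : Type*} [NormedAddCommGroup E] [NormedSpace ℝ E] {c : ι → E → ℝ}
  {Dc : ι → StrongDual ℝ E} {z d : E}

theorem mem_posTangentConeAt_of_active_lt [Finite ι] (hc : ∀ k, HasFDerivAt (c k) (Dc k) z)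
    (hz : ∀ k, c k z ≤ 0) (hd : ∀ k, c k z = 0 → Dc k d < 0) :
    d ∈ posTangentConeAt {x | ∀ k, c k x ≤ 0} z := by
  refine mem_posTangentConeAt_of_frequently_mem (Eventually.frequently ?_)
  refine eventually_all.2 fun k => ?_
  have hray : HasDerivAt (fun t : ℝ => c k (z + t • d)) (Dc k d) 0 := by
    have hline : HasDerivAt (fun t : ℝ => z + t • d) d 0 := by
      simpa using ((hasDerivAt_id (0 : ℝ)).smul_const d).const_add z
    exact (by simpa using hc k : HasFDerivAt (c k) (Dc k) (z + (0 : ℝ) • d)).comp_hasDerivAt 0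
      hline
  rcases (hz k).eq_or_lt with hk | hk
  · filter_upwards [hray.eventually_nhdsGT_lt (hd k hk)] with t ht
    simpa [hk] using ht.le
  · have hcont := hray.continuousAt.tendsto.mono_left (nhdsWithin_le_nhds (s := Set.Ioi 0))
    filter_upwards [hcont.eventually_lt_const (by simpa using hk)] with t ht
    exact ht.le

theorem IsLocalMinOn.exists_kkt_multipliers [Fintype ι] {h : E → ℝ} {Dh : StrongDual ℝ E}
    (hmin : IsLocalMinOn h {x | ∀ k, c k x ≤ 0} z) (hh : HasFDerivAt h Dh z)
    (hc : ∀ k, HasFDerivAt (c k) (Dc k) z) (hz : ∀ k, c k z ≤ 0)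
    (hmfcq : ∃ d, ∀ k, c k z = 0 → Dc k d < 0) :
    ∃ μ : ι → ℝ, 0 ≤ μ ∧ (∀ k, μ k * c k z = 0) ∧ ∀ d, Dh d + ∑ k, μ k * Dc k d = 0 := by
  classical
  let ℓ : Option {k // c k z = 0} → StrongDual ℝ E := fun k => k.elim Dh (Dc ·)
  have hno_descent : ¬∃ d, ∀ k, (ℓ k : E →ₗ[ℝ] ℝ) d < 0 := by
    rintro ⟨d, hd⟩
    have hcone := mem_posTangentConeAt_of_active_lt hc hz fun k hk => hd (some ⟨k, hk⟩)
    exact (hd none).not_ge (hmin.hasFDerivWithinAt_nonneg hh.hasFDerivWithinAt hcone)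
  obtain ⟨ν, hν0, hν_ne, hν⟩ := gordan_alternative _ hno_descent
  simp only [ContinuousLinearMap.coe_coe, Fintype.sum_option, ℓ, Option.elim] at hν
  -- Fritz John multipliers; MFCQ rules out a vanishing multiplier of the objective
  have hν_none : 0 < ν none := by
    refine (hν0 none).lt_of_ne' fun h0 : ν none = 0 => hν_ne ?_
    obtain ⟨d₀, hd₀⟩ := hmfcq
    have hsum := hν d₀
    rw [h0, zero_mul, zero_add] at hsum
    have hterm := (Finset.sum_eq_zero_iff_of_nonpos fun k _ =>
      mul_nonpos_of_nonneg_of_nonpos (hν0 (some k)) (hd₀ k k.2).le).1 hsum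
    ext (_ | k)
    · exact h0
    · exact (mul_eq_zero.1 (hterm k (Finset.mem_univ _))).resolve_right (hd₀ k k.2).ne
  set μ : ι → ℝ := fun k => if hk : c k z = 0 then ν (some ⟨k, hk⟩) / ν none else 0
  refine ⟨μ, fun k => ?_, fun k => ?_, fun d => ?_⟩
  · simp only [μ]
    split_ifs
    exacts [div_nonneg (hν0 _) hν_none.le, le_rfl]
  · simp only [μ]
    split_ifs with hk
    exacts [by rw [hk, mul_zero], zero_mul _]
  · have hsum : ∑ k, μ k * Dc k d = (∑ k : {k // c k z = 0}, ν (some k) * Dc k d) / ν none := by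
      have hinactive : ∑ k : {k // ¬c k z = 0}, μ k * Dc k d = 0 :=
        Finset.sum_eq_zero fun k _ => by simp only [μ, dif_neg k.2, zero_mul]
      rw [← Fintype.sum_subtype_add_sum_subtype (fun k => c k z = 0), hinactive, add_zero,
        Finset.sum_div]
      exact Finset.sum_congr rfl fun k _ => by simp only [μ, dif_pos k.2]; ring
    rw [hsum, ← mul_right_inj' hν_none.ne', mul_add, mul_div_cancel₀ _ hν_none.ne', mul_zero]
    exact hν d

end Constraints

theorem ConvexOn.add_fderiv_sub_le {E : Type*} [NormedAddCommGroup E] [NormedSpace ℝ E]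
    {L : E → ℝ} {D : StrongDual ℝ E} {z₀ : E} (hL : ConvexOn ℝ Set.univ L)
    (hD : HasFDerivAt L D z₀) (z : E) : L z₀ + D (z - z₀) ≤ L z := by
  set γ : ℝ →ᵃ[ℝ] E := AffineMap.lineMap z₀ z
  have hline : HasDerivAt (L ∘ γ) (D (z - z₀)) 0 :=
    (by simpa [γ] using hD : HasFDerivAt L D (γ 0)).comp_hasDerivAt 0
      AffineMap.hasDerivAt_lineMap
  have hslope := (hL.comp_affineMap γ).le_slope_of_hasDerivAt
    (Set.mem_univ 0) (Set.mem_univ 1) zero_lt_one hline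
  rw [slope_def_field] at hslope
  simp only [Function.comp_apply, γ, AffineMap.lineMap_apply_zero, AffineMap.lineMap_apply_one,
    sub_zero, div_one] at hslope
  linarith

theorem isLocalMinOn_penalized_of_calm {Z : Type*} [TopologicalSpace Z] {S : Set Z}
    {F f φ m : Z → ℝ} {z₀ : Z} {lam : ℝ} (hlam : 0 ≤ lam)
    (hcalm : ∀ᶠ p in 𝓝 (z₀, (0 : ℝ)), p.1 ∈ S → f p.1 - φ p.1 - p.2 = 0 →
      0 ≤ F p.1 - F z₀ + lam * |p.2|)
    (hφf : ∀ᶠ z in 𝓝 z₀, z ∈ S → φ z ≤ f z) (hmφ : ∀ᶠ z in 𝓝 z₀, m z ≤ φ z)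
    (hm : ContinuousAt (fun z => f z - m z) z₀) (hm₀ : m z₀ = f z₀) :
    IsLocalMinOn (fun z => F z + lam * (f z - m z)) S z₀ := by
  have hgap : ∀ᶠ z in 𝓝[S] z₀, 0 ≤ f z - φ z ∧ f z - φ z ≤ f z - m z := by
    filter_upwards [nhdsWithin_le_nhds hφf, nhdsWithin_le_nhds hmφ, self_mem_nhdsWithin]
      with z hz₁ hz₂ hzS
    exact ⟨sub_nonneg.2 (hz₁ hzS), by linarith⟩
  have hgap_tendsto : Tendsto (fun z => f z - φ z) (𝓝[S] z₀) (𝓝 0) := by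
    have h := hm.tendsto.mono_left (nhdsWithin_le_nhds (s := S))
    rw [hm₀, sub_self] at h
    exact tendsto_of_tendsto_of_tendsto_of_le_of_le' tendsto_const_nhds h
      (hgap.mono fun _ h => h.1) (hgap.mono fun _ h => h.2)
  have hpair : Tendsto (fun z => (z, f z - φ z)) (𝓝[S] z₀) (𝓝 (z₀, 0)) :=
    (tendsto_id.mono_left nhdsWithin_le_nhds).prodMk_nhds hgap_tendsto
  filter_upwards [hpair.eventually hcalm, hgap, self_mem_nhdsWithin] with z hz ⟨h₀, hle⟩ hzS
  have hcalm_z := hz hzS (sub_self _)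
  rw [abs_of_nonneg h₀] at hcalm_z
  simp only [hm₀, sub_self, mul_zero, add_zero]
  linarith [mul_le_mul_of_nonneg_left hle hlam]

def lowerLevelValues {X Y ι : Type*} (f : X × Y → ℝ) (g : X × Y → ι → ℝ) (x : X) : Set ℝ :=
  {r | ∃ y, (∀ i, g (x, y) i ≤ 0) ∧ f (x, y) = r}

theorem isMinOn_of_le_sInf_lowerLevelValues {X Y ι : Type*} {f : X × Y → ℝ}
    {g : X × Y → ι → ℝ} {x₀ : X} {y₀ : Y}
    (hbdd : BddBelow (lowerLevelValues f g x₀))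
    (h : f (x₀, y₀) ≤ sInf (lowerLevelValues f g x₀)) :
    IsMinOn (fun y => f (x₀, y)) {y | ∀ i, g (x₀, y) i ≤ 0} y₀ :=
  isMinOn_iff.2 fun y hy => h.trans (csInf_le hbdd ⟨y, hy, rfl⟩)

section Bilevel

variable {X Y ι : Type*} [NormedAddCommGroup X] [NormedSpace ℝ X] [NormedAddCommGroup Y]
  [NormedSpace ℝ Y] [Fintype ι]

/-- The affine map `x ↦ L z₀ + ∂ₓL z₀ (x - z₀.1)` for the lower-level Lagrangian
`L = f + ∑ i, w i • g i`, where `L z₀ = f z₀` by complementary slackness. -/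
noncomputable def lagrangianTangent (f : X × Y → ℝ) (Df : StrongDual ℝ (X × Y))
    (Dg : ι → StrongDual ℝ (X × Y)) (w : ι → ℝ) (z₀ : X × Y) (x : X) : ℝ :=
  f z₀ + (Df (x - z₀.1, 0) + ∑ i, w i * Dg i (x - z₀.1, 0))

variable {f : X × Y → ℝ} {g : X × Y → ι → ℝ} {z₀ : X × Y} {Df : StrongDual ℝ (X × Y)}
  {Dg : ι → StrongDual ℝ (X × Y)}

theorem exists_lowerLevel_multipliers (hDf : HasFDerivAt f Df z₀)
    (hDg : ∀ i, HasFDerivAt (fun z => g z i) (Dg i) z₀) (hg₀ : ∀ i, g z₀ i ≤ 0)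
    (hmin : IsMinOn (fun y => f (z₀.1, y)) {y | ∀ i, g (z₀.1, y) i ≤ 0} z₀.2)
    (hreg : ∃ d, ∀ i, g z₀ i = 0 → Dg i (0, d) < 0) :
    ∃ w : ι → ℝ, 0 ≤ w ∧ (∀ i, w i * g z₀ i = 0) ∧
      ∀ dy, Df (0, dy) + ∑ i, w i * Dg i (0, dy) = 0 := by
  have hslice : HasFDerivAt (fun y : Y => (z₀.1, y)) (ContinuousLinearMap.inr ℝ X Y) z₀.2 :=
    hasFDerivAt_prodMk_right z₀.1 z₀.2
  have hDg_slice (i : ι) : HasFDerivAt (fun y => g (z₀.1, y) i)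
      ((Dg i).comp (ContinuousLinearMap.inr ℝ X Y)) z₀.2 :=
    (hDg i).comp (f := fun y : Y => (z₀.1, y)) z₀.2 hslice
  simpa using hmin.localize.exists_kkt_multipliers (hDf.comp z₀.2 hslice) hDg_slice hg₀
    (by simpa using hreg)

@[simp]
theorem lagrangianTangent_self {w : ι → ℝ} : lagrangianTangent f Df Dg w z₀ z₀.1 = f z₀ := by
  simp [lagrangianTangent, Prod.mk_zero_zero]

theorem continuous_lagrangianTangent {w : ι → ℝ} :
    Continuous (lagrangianTangent f Df Dg w z₀) := by
  unfold lagrangianTangent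
  fun_prop

theorem lagrangianTangent_le_sInf_lowerLevelValues (hf : ConvexOn ℝ Set.univ f)
    (hg : ∀ i, ConvexOn ℝ Set.univ fun z => g z i) (hDf : HasFDerivAt f Df z₀)
    (hDg : ∀ i, HasFDerivAt (fun z => g z i) (Dg i) z₀) {w : ι → ℝ} (hw : 0 ≤ w)
    (hwg : ∀ i, w i * g z₀ i = 0) (hstat : ∀ dy, Df (0, dy) + ∑ i, w i * Dg i (0, dy) = 0)
    {x : X} (hne : (lowerLevelValues f g x).Nonempty) :
    lagrangianTangent f Df Dg w z₀ x ≤ sInf (lowerLevelValues f g x) := by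
  refine le_csInf hne ?_
  rintro _ ⟨y, hy, rfl⟩
  have hsplit : (x, y) - z₀ = (x - z₀.1, 0) + (0, y - z₀.2) := by ext <;> simp
  have hf_tan := hf.add_fderiv_sub_le hDf (x, y)
  have hg_tan : ∑ i, w i * (g z₀ i + Dg i ((x, y) - z₀)) ≤ ∑ i, w i * g (x, y) i :=
    Finset.sum_le_sum fun i _ =>
      mul_le_mul_of_nonneg_left ((hg i).add_fderiv_sub_le (hDg i) (x, y)) (hw i)
  have hg_nonpos : ∑ i, w i * g (x, y) i ≤ 0 :=
    Finset.sum_nonpos fun i _ => mul_nonpos_of_nonneg_of_nonpos (hw i) (hy i)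
  simp only [mul_add, hwg, zero_add, Finset.sum_add_distrib, hsplit, map_add] at hf_tan hg_tan
  rw [lagrangianTangent]
  linarith [hstat (y - z₀.2)]

theorem exists_upperLevel_multipliers {κ : Type*} [Fintype κ] {F : X × Y → ℝ}
    {G : X × Y → κ → ℝ} {DF : StrongDual ℝ (X × Y)} {DG : κ → StrongDual ℝ (X × Y)}
    {lam : ℝ} {w : ι → ℝ}
    (hpen : IsLocalMinOn (fun z => F z + lam * (f z - lagrangianTangent f Df Dg w z₀ z.1))
      {z | (∀ j, G z j ≤ 0) ∧ ∀ i, g z i ≤ 0} z₀)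
    (hDF : HasFDerivAt F DF z₀) (hDf : HasFDerivAt f Df z₀)
    (hDG : ∀ j, HasFDerivAt (fun z => G z j) (DG j) z₀)
    (hDg : ∀ i, HasFDerivAt (fun z => g z i) (Dg i) z₀)
    (hG₀ : ∀ j, G z₀ j ≤ 0) (hg₀ : ∀ i, g z₀ i ≤ 0)
    (hreg : ∃ d, (∀ j, G z₀ j = 0 → DG j d < 0) ∧ (∀ i, g z₀ i = 0 → Dg i d < 0))
    (hwstat : ∀ dy, Df (0, dy) + ∑ i, w i * Dg i (0, dy) = 0) :
    ∃ (u : ι → ℝ) (v : κ → ℝ), 0 ≤ u ∧ 0 ≤ v ∧ (∀ i, u i * g z₀ i = 0) ∧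
      (∀ j, v j * G z₀ j = 0) ∧
      (∀ dx, DF (dx, 0) + ∑ i, (u i - lam * w i) * Dg i (dx, 0) + ∑ j, v j * DG j (dx, 0) = 0) ∧
      (∀ dy, DF (0, dy) + ∑ i, (u i - lam * w i) * Dg i (0, dy) + ∑ j, v j * DG j (0, dy) = 0) := by
  set L : StrongDual ℝ (X × Y) := (Df + ∑ i, w i • Dg i).comp
    ((ContinuousLinearMap.inl ℝ X Y).comp (ContinuousLinearMap.fst ℝ X Y))
  have hL (d : X × Y) : L d = Df (d.1, 0) + ∑ i, w i * Dg i (d.1, 0) := by simp [L]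
  have hDpen : HasFDerivAt (fun z => F z + lam * (f z - lagrangianTangent f Df Dg w z₀ z.1))
      (DF + lam • (Df - L)) z₀ := by
    have hminorant (z : X × Y) : lagrangianTangent f Df Dg w z₀ z.1 = f z₀ + (L z - L z₀) := by
      rw [lagrangianTangent, ← map_sub, hL]
      rfl
    simp only [hminorant]
    exact hDF.add ((hDf.sub ((L.hasFDerivAt.sub_const _).const_add _)).const_mul lam)
  obtain ⟨μ, hμ0, hμg, hμstat⟩ := IsLocalMinOn.exists_kkt_multipliers
    (c := Sum.elim (fun j z => G z j) (fun i z => g z i)) (Dc := Sum.elim DG Dg)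
    (by simpa only [Sum.forall, Sum.elim_inl, Sum.elim_inr] using hpen) hDpen
    (Sum.forall.2 ⟨hDG, hDg⟩) (Sum.forall.2 ⟨hG₀, hg₀⟩)
    (hreg.imp fun d hd => Sum.forall.2 hd)
  have hstat (d : X × Y) := hμstat d
  simp only [Fintype.sum_sum_type, Sum.elim_inl, Sum.elim_inr, add_apply, smul_apply, sub_apply,
    hL, smul_eq_mul] at hstat
  have hsplit (a : ι → ℝ) : ∑ i, (μ (.inr i) - lam * w i) * a i
      = ∑ i, μ (.inr i) * a i - lam * ∑ i, w i * a i := by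
    simp only [sub_mul, Finset.sum_sub_distrib, Finset.mul_sum, mul_assoc]
  refine ⟨fun i => μ (.inr i), fun j => μ (.inl j), fun i => hμ0 _, fun j => hμ0 _,
    fun i => hμg _, fun j => hμg _, fun dx => ?_, fun dy => ?_⟩
  · rw [hsplit]
    linear_combination hstat (dx, 0)
  · have h := hstat (0, dy)
    simp only [Prod.mk_zero_zero, map_zero, mul_zero, Finset.sum_const_zero, add_zero,
      sub_zero] at h
    rw [hsplit]
    linear_combination h - lam * hwstat dy

end Bilevel

theorem bilevel_LLVF_necessary_optimality_conditions_general
    (n m p q : ℕ)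
    (F f : (Fin n → ℝ) × (Fin m → ℝ) → ℝ)
    (G : (Fin n → ℝ) × (Fin m → ℝ) → Fin q → ℝ)
    (g : (Fin n → ℝ) × (Fin m → ℝ) → Fin p → ℝ)
    (hF : ContDiff ℝ 1 F) (hf : ContDiff ℝ 1 f)
    (hG : ∀ j, ContDiff ℝ 1 fun z => G z j)
    (hg : ∀ i, ContDiff ℝ 1 fun z => g z i)
    -- (i) full convexity of the lower-level problem
    (hconvf : ConvexOn ℝ Set.univ f)
    (hconvg : ∀ i, ConvexOn ℝ Set.univ fun z => g z i)
    -- the optimal value function φ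
    (φ : (Fin n → ℝ) → ℝ)
    (hφ : ∀ x, φ x = sInf {r | ∃ y : Fin m → ℝ, (∀ i, g (x, y) i ≤ 0) ∧ f (x, y) = r})
    (xbar : Fin n → ℝ) (ybar : Fin m → ℝ)
    -- (ii) φ is finite on a neighborhood of x̄
    (hfinite : ∀ᶠ x in 𝓝 xbar,
      {r | ∃ y : Fin m → ℝ, (∀ i, g (x, y) i ≤ 0) ∧ f (x, y) = r}.Nonempty ∧
      BddBelow {r | ∃ y : Fin m → ℝ, (∀ i, g (x, y) i ≤ 0) ∧ f (x, y) = r})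
    -- (iii) (x̄,ȳ) is a local optimal solution of the LLVF reformulation
    (hfeas : (∀ j, G (xbar, ybar) j ≤ 0) ∧ (∀ i, g (xbar, ybar) i ≤ 0) ∧
      f (xbar, ybar) ≤ φ xbar)
    -- (iv) partial calmness at (x̄,ȳ)
    (hcalm : ∃ lam > (0 : ℝ), ∀ᶠ zt in 𝓝 (((xbar, ybar), (0 : ℝ))),
      ((∀ j, G zt.1 j ≤ 0) ∧ (∀ i, g zt.1 i ≤ 0) ∧ f zt.1 - φ zt.1.1 - zt.2 = 0) →
        0 ≤ F zt.1 - F (xbar, ybar) + lam * |zt.2|)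
    -- (v) lower-level regularity at (x̄,ȳ)
    (hLLreg : ∃ d : Fin m → ℝ, ∀ i, g (xbar, ybar) i = 0 →
      fderiv ℝ (fun z => g z i) (xbar, ybar) (0, d) < 0)
    -- (vi) upper-level regularity at (x̄,ȳ)
    (hULreg : ∃ d : (Fin n → ℝ) × (Fin m → ℝ),
      (∀ j, G (xbar, ybar) j = 0 → fderiv ℝ (fun z => G z j) (xbar, ybar) d < 0) ∧
      (∀ i, g (xbar, ybar) i = 0 → fderiv ℝ (fun z => g z i) (xbar, ybar) d < 0)) :
    ∃ (lam : ℝ) (u w : Fin p → ℝ) (v : Fin q → ℝ), 0 ≤ lam ∧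
      (∀ dx : Fin n → ℝ,
        fderiv ℝ F (xbar, ybar) (dx, 0)
          + ∑ i, (u i - lam * w i) * fderiv ℝ (fun z => g z i) (xbar, ybar) (dx, 0)
          + ∑ j, v j * fderiv ℝ (fun z => G z j) (xbar, ybar) (dx, 0) = 0) ∧
      (∀ dy : Fin m → ℝ,
        fderiv ℝ F (xbar, ybar) (0, dy)
          + ∑ i, (u i - lam * w i) * fderiv ℝ (fun z => g z i) (xbar, ybar) (0, dy)
          + ∑ j, v j * fderiv ℝ (fun z => G z j) (xbar, ybar) (0, dy) = 0) ∧
      (∀ dy : Fin m → ℝ,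
        fderiv ℝ f (xbar, ybar) (0, dy)
          + ∑ i, w i * fderiv ℝ (fun z => g z i) (xbar, ybar) (0, dy) = 0) ∧
      (∀ i, 0 ≤ u i) ∧ (∀ i, g (xbar, ybar) i ≤ 0) ∧
      (∑ i, u i * g (xbar, ybar) i = 0) ∧
      (∀ j, 0 ≤ v j) ∧ (∀ j, G (xbar, ybar) j ≤ 0) ∧
      (∑ j, v j * G (xbar, ybar) j = 0) ∧
      (∀ i, 0 ≤ w i) ∧ (∑ i, w i * g (xbar, ybar) i = 0) := by
  obtain ⟨hG₀, hg₀, hfφ⟩ := hfeas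
  obtain ⟨lam, hlam, hcalm⟩ := hcalm
  have hD {h : (Fin n → ℝ) × (Fin m → ℝ) → ℝ} (hh : ContDiff ℝ 1 h) :
      HasFDerivAt h (fderiv ℝ h (xbar, ybar)) (xbar, ybar) :=
    (hh.differentiable one_ne_zero _).hasFDerivAt
  obtain ⟨w, hw0, hwg, hwstat⟩ := exists_lowerLevel_multipliers (hD hf) (fun i => hD (hg i)) hg₀
    (isMinOn_of_le_sInf_lowerLevelValues hfinite.self_of_nhds.2 (hfφ.trans (hφ xbar).le)) hLLreg
  have hvalues : ∀ᶠ z in 𝓝 (xbar, ybar), (lowerLevelValues f g z.1).Nonempty ∧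
      BddBelow (lowerLevelValues f g z.1) :=
    (continuous_fst.tendsto (xbar, ybar)).eventually hfinite
  set ℓ := lagrangianTangent f (fderiv ℝ f (xbar, ybar))
    (fun i => fderiv ℝ (fun z => g z i) (xbar, ybar)) w (xbar, ybar)
  have hpen := isLocalMinOn_penalized_of_calm (S := {z | (∀ j, G z j ≤ 0) ∧ ∀ i, g z i ≤ 0})
    (φ := fun z => φ z.1) (m := fun z => ℓ z.1) hlam.le
    (hcalm.mono fun _ h hS heq => h ⟨hS.1, hS.2, heq⟩)
    (hvalues.mono fun z hz hS => (hφ z.1).trans_le (csInf_le hz.2 ⟨z.2, hS.2, rfl⟩))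
    (hvalues.mono fun z hz => (hφ z.1).symm ▸ lagrangianTangent_le_sInf_lowerLevelValues
      hconvf hconvg (hD hf) (fun i => hD (hg i)) hw0 hwg hwstat hz.1)
    ((hD hf).continuousAt.sub (continuous_lagrangianTangent.comp continuous_fst).continuousAt)
    lagrangianTangent_self
  obtain ⟨u, v, hu0, hv0, hug, hvG, hx, hy⟩ := exists_upperLevel_multipliers hpen (hD hF) (hD hf)
    (fun j => hD (hG j)) (fun i => hD (hg i)) hG₀ hg₀ hULreg hwstat
  exact ⟨lam, u, w, v, hlam.le, hx, hy, hwstat, hu0, hg₀, Finset.sum_eq_zero fun i _ => hug i,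
    hv0, hG₀, Finset.sum_eq_zero fun j _ => hvG j, hw0, Finset.sum_eq_zero fun i _ => hwg i⟩

/-- KKT-type necessary optimality conditions for the lower-level value function
reformulation of the bilevel program, under full convexity of the lower level,
finiteness of the value function near `x̄`, partial calmness, and lower- and
upper-level regularity (MFCQ). -/
theorem bilevel_LLVF_necessary_optimality_conditions
    (n m p q : ℕ)
    (F f : (Fin n → ℝ) × (Fin m → ℝ) → ℝ)
    (G : (Fin n → ℝ) × (Fin m → ℝ) → Fin q → ℝ)
    (g : (Fin n → ℝ) × (Fin m → ℝ) → Fin p → ℝ)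
    (hF : ContDiff ℝ 1 F) (hf : ContDiff ℝ 1 f)
    (hG : ∀ j, ContDiff ℝ 1 fun z => G z j)
    (hg : ∀ i, ContDiff ℝ 1 fun z => g z i)
    -- (i) full convexity of the lower-level problem
    (hconvf : ConvexOn ℝ Set.univ f)
    (hconvg : ∀ i, ConvexOn ℝ Set.univ fun z => g z i)
    -- the optimal value function φ
    (φ : (Fin n → ℝ) → ℝ)
    (hφ : ∀ x, φ x = sInf {r | ∃ y : Fin m → ℝ, (∀ i, g (x, y) i ≤ 0) ∧ f (x, y) = r})
    (xbar : Fin n → ℝ) (ybar : Fin m → ℝ)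
    -- (ii) φ is finite on a neighborhood of x̄
    (hfinite : ∀ᶠ x in 𝓝 xbar,
      {r | ∃ y : Fin m → ℝ, (∀ i, g (x, y) i ≤ 0) ∧ f (x, y) = r}.Nonempty ∧
      BddBelow {r | ∃ y : Fin m → ℝ, (∀ i, g (x, y) i ≤ 0) ∧ f (x, y) = r})
    -- (iii) (x̄,ȳ) is a local optimal solution of the LLVF reformulation
    (hfeas : (∀ j, G (xbar, ybar) j ≤ 0) ∧ (∀ i, g (xbar, ybar) i ≤ 0) ∧
      f (xbar, ybar) ≤ φ xbar)
    (hlocal : ∀ᶠ z in 𝓝 (xbar, ybar),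
      ((∀ j, G z j ≤ 0) ∧ (∀ i, g z i ≤ 0) ∧ f z ≤ φ z.1) → F (xbar, ybar) ≤ F z)
    -- (iv) partial calmness at (x̄,ȳ)
    (hcalm : ∃ lam > (0 : ℝ), ∀ᶠ zt in 𝓝 (((xbar, ybar), (0 : ℝ))),
      ((∀ j, G zt.1 j ≤ 0) ∧ (∀ i, g zt.1 i ≤ 0) ∧ f zt.1 - φ zt.1.1 - zt.2 = 0) →
        0 ≤ F zt.1 - F (xbar, ybar) + lam * |zt.2|)
    -- (v) lower-level regularity at (x̄,ȳ)
    (hLLreg : ∃ d : Fin m → ℝ, ∀ i, g (xbar, ybar) i = 0 →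
      fderiv ℝ (fun z => g z i) (xbar, ybar) (0, d) < 0)
    -- (vi) upper-level regularity at (x̄,ȳ)
    (hULreg : ∃ d : (Fin n → ℝ) × (Fin m → ℝ),
      (∀ j, G (xbar, ybar) j = 0 → fderiv ℝ (fun z => G z j) (xbar, ybar) d < 0) ∧
      (∀ i, g (xbar, ybar) i = 0 → fderiv ℝ (fun z => g z i) (xbar, ybar) d < 0)) :
    ∃ (lam : ℝ) (u w : Fin p → ℝ) (v : Fin q → ℝ), 0 ≤ lam ∧
      (∀ dx : Fin n → ℝ,
        fderiv ℝ F (xbar, ybar) (dx, 0)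
          + ∑ i, (u i - lam * w i) * fderiv ℝ (fun z => g z i) (xbar, ybar) (dx, 0)
          + ∑ j, v j * fderiv ℝ (fun z => G z j) (xbar, ybar) (dx, 0) = 0) ∧
      (∀ dy : Fin m → ℝ,
        fderiv ℝ F (xbar, ybar) (0, dy)
          + ∑ i, (u i - lam * w i) * fderiv ℝ (fun z => g z i) (xbar, ybar) (0, dy)
          + ∑ j, v j * fderiv ℝ (fun z => G z j) (xbar, ybar) (0, dy) = 0) ∧
      (∀ dy : Fin m → ℝ,
        fderiv ℝ f (xbar, ybar) (0, dy)
          + ∑ i, w i * fderiv ℝ (fun z => g z i) (xbar, ybar) (0, dy) = 0) ∧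
      (∀ i, 0 ≤ u i) ∧ (∀ i, g (xbar, ybar) i ≤ 0) ∧
      (∑ i, u i * g (xbar, ybar) i = 0) ∧
      (∀ j, 0 ≤ v j) ∧ (∀ j, G (xbar, ybar) j ≤ 0) ∧
      (∑ j, v j * G (xbar, ybar) j = 0) ∧
      (∀ i, 0 ≤ w i) ∧ (∑ i, w i * g (xbar, ybar) i = 0) :=
  bilevel_LLVF_necessary_optimality_conditions_general n m p q F f G g hF hf hG hg hconvf hconvg φ
    hφ xbar ybar hfinite hfeas hcalm hLLreg hULreg
end

section
/- Suppose f and φ are continuous near the relevant points (with φ(x) := inf{ f(x,y) : g(x,y) ≤ 0 } finite near x̄) and let (x̄,ȳ) be a local optimal solution of the problem min F(x,y) subject to G(x,y) ≤ 0, g(x,y) ≤ 0, f(x,y) ≤ φ(x). Then this problem is partially calm at (x̄,ȳ) if and only if there exists λ > 0 such that (x̄,ȳ) is a local optimal solution of the partially penalized problem min F(x,y) + λ( f(x,y) − φ(x) ) subject to G(x,y) ≤ 0, g(x,y) ≤ 0. -/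
open Filter Topology

/-- Partial calmness of the LLVF reformulation at a local optimal solution `(x̄,ȳ)` is
equivalent to the existence of `λ > 0` such that `(x̄,ȳ)` is a local optimal solution of
the partially penalized problem
`min F(x,y) + λ(f(x,y) − φ(x))  s.t.  G(x,y) ≤ 0, g(x,y) ≤ 0`. -/
theorem partial_calmness_iff_partial_exact_penalization
    (n m p q : ℕ)
    (F f : (Fin n → ℝ) × (Fin m → ℝ) → ℝ)
    (G : (Fin n → ℝ) × (Fin m → ℝ) → Fin q → ℝ)
    (g : (Fin n → ℝ) × (Fin m → ℝ) → Fin p → ℝ)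
    (φ : (Fin n → ℝ) → ℝ)
    (hφ : ∀ x, φ x = sInf {r | ∃ y : Fin m → ℝ, (∀ i, g (x, y) i ≤ 0) ∧ f (x, y) = r})
    (xbar : Fin n → ℝ) (ybar : Fin m → ℝ)
    -- φ is finite near x̄
    (hfinite : ∀ᶠ x in 𝓝 xbar,
      {r | ∃ y : Fin m → ℝ, (∀ i, g (x, y) i ≤ 0) ∧ f (x, y) = r}.Nonempty ∧
      BddBelow {r | ∃ y : Fin m → ℝ, (∀ i, g (x, y) i ≤ 0) ∧ f (x, y) = r})
    -- f and φ are continuous near the relevant points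
    (hfcont : ∃ V ∈ 𝓝 (xbar, ybar), ContinuousOn f V)
    (hφcont : ∃ W ∈ 𝓝 xbar, ContinuousOn φ W)
    -- (x̄,ȳ) is a local optimal solution of the LLVF reformulation
    (hfeas : (∀ j, G (xbar, ybar) j ≤ 0) ∧ (∀ i, g (xbar, ybar) i ≤ 0) ∧
      f (xbar, ybar) ≤ φ xbar)
    (hlocal : ∀ᶠ z in 𝓝 (xbar, ybar),
      ((∀ j, G z j ≤ 0) ∧ (∀ i, g z i ≤ 0) ∧ f z ≤ φ z.1) → F (xbar, ybar) ≤ F z) :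
    -- partial calmness at (x̄,ȳ) ...
    (∃ lam > (0 : ℝ), ∀ᶠ zt in 𝓝 (((xbar, ybar), (0 : ℝ))),
      ((∀ j, G zt.1 j ≤ 0) ∧ (∀ i, g zt.1 i ≤ 0) ∧ f zt.1 - φ zt.1.1 - zt.2 = 0) →
        0 ≤ F zt.1 - F (xbar, ybar) + lam * |zt.2|)
    ↔
    -- ... iff (x̄,ȳ) is a local optimal solution of the penalized problem for some λ > 0
    (∃ lam > (0 : ℝ), ∀ᶠ z in 𝓝 (xbar, ybar),
      ((∀ j, G z j ≤ 0) ∧ (∀ i, g z i ≤ 0)) →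
        F (xbar, ybar) + lam * (f (xbar, ybar) - φ xbar) ≤ F z + lam * (f z - φ z.1)) := by
  have h0 := hfinite.self_of_nhds
  have hbar : f (xbar, ybar) = φ xbar := by
    have hle : φ xbar ≤ f (xbar, ybar) := by
      rw [hφ]
      exact csInf_le h0.2 ⟨ybar, hfeas.2.1, rfl⟩
    linarith [hfeas.2.2]
  obtain ⟨V, hV, hVc⟩ := hfcont
  obtain ⟨W, hW, hWc⟩ := hφcont
  have hfat : ContinuousAt f (xbar, ybar) := hVc.continuousAt hV
  have hφat : ContinuousAt φ xbar := hWc.continuousAt hW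
  constructor
  · rintro ⟨lam, hlam, hev⟩
    refine ⟨lam, hlam, ?_⟩
    have htend : Tendsto (fun z : (Fin n → ℝ) × (Fin m → ℝ) => (z, f z - φ z.1))
        (𝓝 (xbar, ybar)) (𝓝 ((xbar, ybar), (0 : ℝ))) := by
      refine Tendsto.prodMk_nhds tendsto_id ?_
      have h1 : Tendsto (fun z : (Fin n → ℝ) × (Fin m → ℝ) => f z - φ z.1)
          (𝓝 (xbar, ybar)) (𝓝 (f (xbar, ybar) - φ xbar)) :=
        hfat.tendsto.sub ((hφat.comp continuousAt_fst).tendsto)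
      simpa [hbar] using h1
    have hev2 := htend.eventually hev
    have hfin2 : ∀ᶠ z : (Fin n → ℝ) × (Fin m → ℝ) in 𝓝 (xbar, ybar),
        {r | ∃ y : Fin m → ℝ, (∀ i, g (z.1, y) i ≤ 0) ∧ f (z.1, y) = r}.Nonempty ∧
        BddBelow {r | ∃ y : Fin m → ℝ, (∀ i, g (z.1, y) i ≤ 0) ∧ f (z.1, y) = r} :=
      ((continuous_fst.tendsto ((xbar, ybar) : (Fin n → ℝ) × (Fin m → ℝ))).eventually hfinite)
    filter_upwards [hev2, hfin2] with z hz hfz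
    rintro ⟨hG, hg⟩
    have hzmem : f z ∈ {r | ∃ y : Fin m → ℝ, (∀ i, g (z.1, y) i ≤ 0) ∧ f (z.1, y) = r} := by
      refine ⟨z.2, ?_, ?_⟩ <;> simp [hg]
    have hu : 0 ≤ f z - φ z.1 := by
      have := csInf_le hfz.2 hzmem
      rw [← hφ] at this
      linarith
    have := hz ⟨hG, hg, by ring⟩
    rw [abs_of_nonneg hu] at this
    rw [hbar]
    simp only [sub_self, mul_zero, add_zero] at *
    linarith
  · rintro ⟨lam, hlam, hev⟩
    refine ⟨lam, hlam, ?_⟩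
    have hev2 := ((continuous_fst.tendsto (((xbar, ybar), (0 : ℝ)))).eventually hev)
    filter_upwards [hev2] with zt hzt
    rintro ⟨hG, hg, hu⟩
    have h1 := hzt ⟨hG, hg⟩
    rw [hbar, sub_self, mul_zero, add_zero] at h1
    have h2 : f zt.1 - φ zt.1.1 = zt.2 := by linarith
    have h3 : lam * zt.2 ≤ lam * |zt.2| :=
      mul_le_mul_of_nonneg_left (le_abs_self _) hlam.le
    rw [h2] at h1
    linarith
end

section
/- Let μ > 0 and u, g ∈ ℝ. Then √(u² + g² + 2μ) − u + g = 0 if and only if u > 0, −g > 0 and −u·g = μ. -/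
/-- Zeros of the smoothed Fischer–Burmeister expression
`ψ_μ(u,g) = √(u² + g² + 2μ) − u + g` (for `μ > 0`) are exactly the points with
`u > 0`, `−g > 0` and `−u·g = μ`. -/
theorem smoothed_fischer_burmeister_zero_iff (μ u g : ℝ) (hμ : 0 < μ) :
    Real.sqrt (u ^ 2 + g ^ 2 + 2 * μ) - u + g = 0 ↔
      0 < u ∧ 0 < -g ∧ -(u * g) = μ := by
  constructor
  · intro h
    have hs : Real.sqrt (u ^ 2 + g ^ 2 + 2 * μ) = u - g := by linarith
    have hpos : 0 < u ^ 2 + g ^ 2 + 2 * μ := by positivity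
    have hug : 0 < u - g := by
      rw [← hs]; exact Real.sqrt_pos.mpr hpos
    have hsq : u ^ 2 + g ^ 2 + 2 * μ = (u - g) ^ 2 := by
      rw [← hs, Real.sq_sqrt hpos.le]
    have hmu : -(u * g) = μ := by nlinarith
    have hgl : u * g < 0 := by nlinarith
    have hu : 0 < u := by nlinarith
    have hg : 0 < -g := by nlinarith
    exact ⟨hu, hg, hmu⟩
  · rintro ⟨hu, hg, hmu⟩
    have hs : Real.sqrt (u ^ 2 + g ^ 2 + 2 * μ) = u - g := by
      rw [show u ^ 2 + g ^ 2 + 2 * μ = (u - g) ^ 2 by nlinarith]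
      exact Real.sqrt_sq (by nlinarith)
    rw [hs]; ring
end

section
/- Let n, m, p, q ∈ ℕ, let H be a symmetric positive definite (n+m)×(n+m) real matrix, let a₁,…,a_p ∈ ℝⁿ⁺ᵐ, b₁,…,b_q ∈ ℝⁿ⁺ᵐ, let C be a real m×(n+m) matrix, and write a_j^y ∈ ℝᵐ for the last m components of a_j. Let τ_j, θ_j > 0 and γ_j, κ_j < 0 for j = 1,…,p, and α_j > 0, β_j < 0 for j = 1,…,q, and let λ satisfy 0 < λ < (κ_j/θ_j)·(τ_j/γ_j) for all j = 1,…,p. Then for any d₁ ∈ ℝⁿ⁺ᵐ, d₂, d₄ ∈ ℝ^p, d₃ ∈ ℝ^q satisfying H d₁ + Σⱼ d₂ⱼ aⱼ + Σⱼ d₃ⱼ bⱼ − λ Σⱼ d₄ⱼ aⱼ = 0; τ_j ⟨a_j, d₁⟩ + γ_j d₂ⱼ = 0 for all j ≤ p; α_j ⟨b_j, d₁⟩ + β_j d₃ⱼ = 0 for all j ≤ q; θ_j ⟨a_j, d₁⟩ + κ_j d₄ⱼ = 0 for all j ≤ p; and C d₁ + Σⱼ d₄ⱼ a_j^y = 0,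 one has d₁ = 0, d₂ = 0, d₃ = 0 and d₄ = 0. -/
/-!
Dot the first equation with `d₁`. With `sⱼ = ⟨aⱼ, d₁⟩` and `tⱼ = ⟨bⱼ, d₁⟩` this gives
`⟨H d₁, d₁⟩ + ∑ⱼ (d₂ⱼ - λ d₄ⱼ) sⱼ + ∑ⱼ d₃ⱼ tⱼ = 0`. The scalar equations express `d₂ⱼ, d₄ⱼ`
through `sⱼ` and `d₃ⱼ` through `tⱼ`, and the signs of the coefficients together with the bound on
`λ` make every summand nonnegative. Positive definiteness of `H` then forces `d₁ = 0`, so all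
`sⱼ, tⱼ` vanish and the scalar equations give `d₂ = d₃ = d₄ = 0`.
-/

open Matrix

theorem Matrix.PosDef.eq_zero_of_mulVec_add_sum_smul_eq_zero {ι n : Type*} [Fintype ι]
    [Fintype n] {H : Matrix n n ℝ} (hH : H.PosDef) {d : n → ℝ} {c : ι → ℝ} {v : ι → n → ℝ}
    (hc : ∀ i, 0 ≤ c i * (v i ⬝ᵥ d)) (h : H *ᵥ d + ∑ i, c i • v i = 0) : d = 0 := by
  have hdot : (H *ᵥ d) ⬝ᵥ d + ∑ i, c i * (v i ⬝ᵥ d) = 0 := by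
    simpa [add_dotProduct, sum_dotProduct, smul_dotProduct] using congrArg (· ⬝ᵥ d) h
  by_contra hd
  have hpos : 0 < (H *ᵥ d) ⬝ᵥ d := by
    simpa [dotProduct_comm d] using hH.dotProduct_mulVec_pos hd
  linarith [Finset.sum_nonneg fun i (_ : i ∈ Finset.univ) => hc i]

section OrderedField

variable {K : Type*} [Field K] [LinearOrder K] [IsStrictOrderedRing K]

theorem mul_nonneg_of_mul_add_mul_eq_zero {c e s x : K} (hc : 0 ≤ c) (he : e < 0)
    (h : c * s + e * x = 0) : 0 ≤ x * s := by
  refine nonneg_of_mul_nonpos_right (a := e) ?_ he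
  have hes : e * (x * s) = -(c * s ^ 2) := by linear_combination s * h
  rw [hes, neg_nonpos]
  positivity

theorem sub_mul_nonneg_of_lt_threshold {τ γ θ κ lam s x y : K} (hθ : 0 < θ) (hγ : γ < 0)
    (hκ : κ < 0) (hlam : lam < κ / θ * (τ / γ)) (hx : τ * s + γ * x = 0)
    (hy : θ * s + κ * y = 0) : 0 ≤ (x - lam * y) * s := by
  have hθγ : θ * γ < 0 := mul_neg_of_pos_of_neg hθ hγ
  rw [div_mul_div_comm, lt_div_iff_of_neg hθγ] at hlam
  -- `γ κ (x - lam * y) = (lam θ γ - κ τ) s`, and the bound on `lam` makes this coefficient `≥ 0`.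
  refine mul_nonneg_of_mul_add_mul_eq_zero (c := lam * (θ * γ) - κ * τ) (e := -(γ * κ))
    (by linarith) (neg_neg_of_pos (mul_pos_of_neg_of_neg hγ hκ)) ?_
  linear_combination (-κ) * hx + lam * γ * hy

end OrderedField

theorem smoothed_jacobian_columns_linearly_independent_general
    (n m p q : ℕ) (lam : ℝ)
    (H : Matrix (Fin (n + m)) (Fin (n + m)) ℝ) (hH : H.PosDef)
    (a : Fin p → Fin (n + m) → ℝ) (b : Fin q → Fin (n + m) → ℝ)
    (τ γ θ κ : Fin p → ℝ) (α β : Fin q → ℝ)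
    (hθ : ∀ j, 0 < θ j)
    (hγ : ∀ j, γ j < 0) (hκ : ∀ j, κ j < 0)
    (hα : ∀ j, 0 < α j) (hβ : ∀ j, β j < 0)
    (hlam : ∀ j, lam < (κ j / θ j) * (τ j / γ j))
    (d₁ : Fin (n + m) → ℝ) (d₂ d₄ : Fin p → ℝ) (d₃ : Fin q → ℝ)
    (h1 : H.mulVec d₁ + ∑ j, d₂ j • a j + ∑ j, d₃ j • b j - lam • ∑ j, d₄ j • a j = 0)
    (h2 : ∀ j, τ j * (∑ k, a j k * d₁ k) + γ j * d₂ j = 0)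
    (h3 : ∀ j, α j * (∑ k, b j k * d₁ k) + β j * d₃ j = 0)
    (h4 : ∀ j, θ j * (∑ k, a j k * d₁ k) + κ j * d₄ j = 0) :
    d₁ = 0 ∧ d₂ = 0 ∧ d₃ = 0 ∧ d₄ = 0 := by
  have h1' : H *ᵥ d₁ + ∑ i, Sum.elim (d₂ - lam • d₄) d₃ i • Sum.elim a b i = 0 := by
    rw [← h1, Fintype.sum_sum_type]
    simp only [Sum.elim_inl, Sum.elim_inr, Pi.sub_apply, Pi.smul_apply, smul_eq_mul, sub_smul,
      mul_smul, Finset.sum_sub_distrib, Finset.smul_sum]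
    abel
  have hd₁ : d₁ = 0 := by
    refine hH.eq_zero_of_mulVec_add_sum_smul_eq_zero (fun i => ?_) h1'
    rcases i with j | j
    · exact sub_mul_nonneg_of_lt_threshold (hθ j) (hγ j) (hκ j) (hlam j) (h2 j) (h4 j)
    · exact mul_nonneg_of_mul_add_mul_eq_zero (hα j).le (hβ j) (h3 j)
  subst hd₁
  refine ⟨rfl, funext fun j => ?_, funext fun j => ?_, funext fun j => ?_⟩
  · simpa [(hγ j).ne] using h2 j
  · simpa [(hβ j).ne] using h3 j
  · simpa [(hκ j).ne] using h4 j

/-- Linear-algebraic content of Theorem 4.2: at a zero of the smoothed system, with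
`H = ∇²L^λ(z̄)` positive definite, smoothed Fischer–Burmeister coefficients of the
appropriate signs, and `0 < λ < (κ_j/θ_j)(τ_j/γ_j)` for all `j`, the columns of the
Jacobian `∇Υ^λ_μ(z̄)` are linearly independent: the homogeneous system only has the
trivial solution. -/
theorem smoothed_jacobian_columns_linearly_independent
    (n m p q : ℕ) (lam : ℝ)
    (H : Matrix (Fin (n + m)) (Fin (n + m)) ℝ) (hH : H.PosDef)
    (a : Fin p → Fin (n + m) → ℝ) (b : Fin q → Fin (n + m) → ℝ)
    (C : Matrix (Fin m) (Fin (n + m)) ℝ)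
    (τ γ θ κ : Fin p → ℝ) (α β : Fin q → ℝ)
    (hτ : ∀ j, 0 < τ j) (hθ : ∀ j, 0 < θ j)
    (hγ : ∀ j, γ j < 0) (hκ : ∀ j, κ j < 0)
    (hα : ∀ j, 0 < α j) (hβ : ∀ j, β j < 0)
    (hlam0 : 0 < lam) (hlam : ∀ j, lam < (κ j / θ j) * (τ j / γ j))
    (d₁ : Fin (n + m) → ℝ) (d₂ d₄ : Fin p → ℝ) (d₃ : Fin q → ℝ)
    (h1 : H.mulVec d₁ + ∑ j, d₂ j • a j + ∑ j, d₃ j • b j - lam • ∑ j, d₄ j • a j = 0)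
    (h2 : ∀ j, τ j * (∑ k, a j k * d₁ k) + γ j * d₂ j = 0)
    (h3 : ∀ j, α j * (∑ k, b j k * d₁ k) + β j * d₃ j = 0)
    (h4 : ∀ j, θ j * (∑ k, a j k * d₁ k) + κ j * d₄ j = 0)
    (h5 : C.mulVec d₁ + ∑ j, d₄ j • (fun k : Fin m => a j (Fin.natAdd n k)) = 0) :
    d₁ = 0 ∧ d₂ = 0 ∧ d₃ = 0 ∧ d₄ = 0 :=
  smoothed_jacobian_columns_linearly_independent_general n m p q lam H hH a b τ γ θ κ α β hθ hγ hκ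
    hα hβ hlam d₁ d₂ d₄ d₃ h1 h2 h3 h4
end

section
/- Let (u,g) ∈ ℝ² and for μ > 0 set τ_μ := g/√(u² + g² + 2μ) + 1 and γ_μ := u/√(u² + g² + 2μ) − 1. Then: (a) if (u,g) ≠ (0,0), then as μ → 0⁺ one has τ_μ → g/√(u²+g²) + 1 and γ_μ → u/√(u²+g²) − 1; (b) if (u,g) = (0,0), then τ_μ = 1 and γ_μ = −1 for every μ > 0. In both cases the limit of (τ_μ, γ_μ) as μ → 0⁺ exists and lies in the set { (ζ + 1, ρ − 1) : ζ, ρ ∈ ℝ, ζ² + ρ² ≤ 1 }. -/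
open Filter Topology

-- `a ^ 2 ≤ c` excludes `c = 0 ≠ a`, where the quotient blows up although `a / √0 = 0`.
lemma tendsto_div_sqrt_add_two_mul (a c : ℝ) (h : a ^ 2 ≤ c) :
    Tendsto (fun μ : ℝ => a / Real.sqrt (c + 2 * μ)) (𝓝 0) (𝓝 (a / Real.sqrt c)) := by
  rcases ((sq_nonneg a).trans h).lt_or_eq with hc | hc
  · have hsqrt : Tendsto (fun μ : ℝ => Real.sqrt (c + 2 * μ)) (𝓝 0) (𝓝 (Real.sqrt c)) :=
      (by fun_prop : Continuous fun μ : ℝ => Real.sqrt (c + 2 * μ)).tendsto' 0 _ (by simp)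
    exact tendsto_const_nhds.div hsqrt (Real.sqrt_pos.mpr hc).ne'
  · obtain rfl : a = 0 := pow_eq_zero_iff two_ne_zero |>.mp (le_antisymm (hc ▸ h) (sq_nonneg a))
    simp

lemma div_sqrt_sq_add_div_sqrt_sq_le_one {a b c : ℝ} (h : a ^ 2 + b ^ 2 ≤ c) :
    (a / Real.sqrt c) ^ 2 + (b / Real.sqrt c) ^ 2 ≤ 1 := by
  have hc : 0 ≤ c := (add_nonneg (sq_nonneg a) (sq_nonneg b)).trans h
  rw [div_pow, div_pow, Real.sq_sqrt hc, ← add_div]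
  exact div_le_one_of_le₀ h hc

/-- Componentwise Jacobian consistency of the smoothed Fischer–Burmeister coefficients:
(a) if `(u,g) ≠ (0,0)` then `(τ_μ, γ_μ)` tends to the unsmoothed coefficients as
`μ → 0⁺`; (b) if `(u,g) = (0,0)` then `τ_μ = 1` and `γ_μ = −1` for all `μ > 0`;
in both cases the limit exists and lies in the set
`{(ζ+1, ρ−1) : ζ² + ρ² ≤ 1}` of C-subdifferential coefficient pairs. -/
theorem smoothed_tau_gamma_jacobian_consistency (u g : ℝ) :
    ((u, g) ≠ (0, 0) →
      Tendsto
        (fun μ : ℝ => (g / Real.sqrt (u ^ 2 + g ^ 2 + 2 * μ) + 1,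
          u / Real.sqrt (u ^ 2 + g ^ 2 + 2 * μ) - 1))
        (𝓝[>] 0)
        (𝓝 (g / Real.sqrt (u ^ 2 + g ^ 2) + 1, u / Real.sqrt (u ^ 2 + g ^ 2) - 1))) ∧
    ((u, g) = (0, 0) → ∀ μ : ℝ, 0 < μ →
      g / Real.sqrt (u ^ 2 + g ^ 2 + 2 * μ) + 1 = 1 ∧
      u / Real.sqrt (u ^ 2 + g ^ 2 + 2 * μ) - 1 = -1) ∧
    (∃ L : ℝ × ℝ,
      Tendsto
        (fun μ : ℝ => (g / Real.sqrt (u ^ 2 + g ^ 2 + 2 * μ) + 1,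
          u / Real.sqrt (u ^ 2 + g ^ 2 + 2 * μ) - 1))
        (𝓝[>] 0) (𝓝 L) ∧
      ∃ ζ ρ : ℝ, ζ ^ 2 + ρ ^ 2 ≤ 1 ∧ L = (ζ + 1, ρ - 1)) := by
  have hτ := tendsto_div_sqrt_add_two_mul g (u ^ 2 + g ^ 2) (le_add_of_nonneg_left (sq_nonneg u))
  have hγ := tendsto_div_sqrt_add_two_mul u (u ^ 2 + g ^ 2) (le_add_of_nonneg_right (sq_nonneg g))
  -- At `(u, g) = (0, 0)` both limits are the junk values `0 / √0 = 0`, which are the right ones.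
  have hlim := ((hτ.add_const 1).prodMk_nhds (hγ.sub_const 1)).mono_left (nhdsWithin_le_nhds (s := Set.Ioi 0))
  refine ⟨fun _ => hlim, ?_, _, hlim, _, _, div_sqrt_sq_add_div_sqrt_sq_le_one ?_, rfl⟩
  · rintro h μ -
    obtain ⟨rfl, rfl⟩ := Prod.mk.inj h
    simp
  · rw [add_comm]
end
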